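/- Consider the Poisson birth-death process on X = ℕ₀ with intensity λ > 0: k(x,x+1) = λ, k(x,x−1) = x, and k(x,y) = 0 for |x−y| > 1, x ≠ y; its reversible invariant probability measure has density π_λ(x) = λ^x e^{−λ}/x! with respect to the counting measure. For k ∈ ℕ let f_k(x) = e^{kx}/e^{λ(e^k−1)}. Then f_k ∈ P_*(X), Ent_μ(f_k) = λ(k e^k − e^k + 1), and I(f_k) = λ k (e^k − 1); in particular Ent_μ(f_k)/I(f_k) → 1 as k → ∞. Consequently, for every growth function Φ with lim_{r→∞} Φ(r)/r = 0, the generator L does not satisfy the entropy-information inequality EI(Φ). -/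

import Mathlib

open Real Filter MeasureTheory Set

/-- `M₁(x) = ∑_{y ≠ x} k(x,y)`. -/
noncomputable def M1fn {X : Type*} (k : X → X → ℝ) (x : X) : ℝ :=
  ∑' y : {y : X // y ≠ x}, k x y

/-- The standing assumptions on the transition rates and the invariant probability
measure: nonnegative off-diagonal rates, summable rows, `k(x,x) = -M₁(x)`,
a strictly positive probability density and detailed balance. -/
def MarkovSetting {X : Type*} (k : X → X → ℝ) (μ : X → ℝ) : Prop :=
  (∀ x y, x ≠ y → 0 ≤ k x y) ∧
  (∀ x : X, Summable fun y : {y : X // y ≠ x} => k x y) ∧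
  (∀ x : X, k x x = -M1fn k x) ∧
  (∀ x, 0 < μ x) ∧ (∑' x, μ x) = 1 ∧
  (∀ x y, μ x * k x y = μ y * k y x)

/-- The entropy `Ent_μ(f)`. -/
noncomputable def entFn {X : Type*} (μ f : X → ℝ) : ℝ :=
  (∑' x, f x * Real.log (f x) * μ x) -
    (∑' x, f x * μ x) * Real.log (∑' x, f x * μ x)

/-- The Fisher information `I(f) = (1/2) ∑_{x,y} k(x,y)(f(y)-f(x))(log f(y)-log f(x)) μ(x)`. -/
noncomputable def fisherFn {X : Type*} (k : X → X → ℝ) (μ f : X → ℝ) : ℝ :=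
  (1/2) * ∑' p : X × X,
    k p.1 p.2 * (f p.2 - f p.1) * (Real.log (f p.2) - Real.log (f p.1)) * μ p.1

/-- Finiteness of the Fisher information. -/
def FisherFinite {X : Type*} (k : X → X → ℝ) (μ f : X → ℝ) : Prop :=
  Summable fun p : X × X =>
    k p.1 p.2 * (f p.2 - f p.1) * (Real.log (f p.2) - Real.log (f p.1)) * μ p.1

/-- A growth function: strictly increasing, concave, `C¹` and positive on `(0,∞)`. -/
def GrowthFun (Φ : ℝ → ℝ) : Prop :=
  StrictMonoOn Φ (Ioi 0) ∧ ConcaveOn ℝ (Ioi 0) Φ ∧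
    ContDiffOn ℝ 1 Φ (Ioi 0) ∧ ∀ r : ℝ, 0 < r → 0 < Φ r

/-- The entropy-information inequality `EI(Φ)`:
`Ent_μ(f) ≤ Φ(I(f))` for all probability densities `f ∈ P_*(X)` with finite entropy
and finite Fisher information. -/
def EIineq {X : Type*} (k : X → X → ℝ) (μ : X → ℝ) (Φ : ℝ → ℝ) : Prop :=
  ∀ f : X → ℝ, (∀ x, 0 < f x) → (∑' x, f x * μ x) = 1 →
    (Summable fun x => f x * Real.log (f x) * μ x) →
    FisherFinite k μ f →
    entFn μ f ≤ Φ (fisherFn k μ f)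

/-- The transition kernel of the birth-death process in the Poisson case with
intensity `λ`: `k(x,x+1) = λ`, `k(x,x-1) = x`, `k(x,x) = -(λ+x)` and `0` otherwise. -/
noncomputable def kPoisson (lam : ℝ) : ℕ → ℕ → ℝ := fun x y =>
  if y = x + 1 then lam
  else if y + 1 = x then (x : ℝ)
  else if y = x then -(lam + (x : ℝ))
  else 0

/-- The Poisson density `π_λ(x) = λ^x e^{-λ}/x!`. -/
noncomputable def piPoisson (lam : ℝ) (x : ℕ) : ℝ :=
  lam ^ x * Real.exp (-lam) / (Nat.factorial x : ℝ)

/-- The test functions `f_k(x) = e^{kx}/e^{λ(e^k-1)}`. -/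
noncomputable def fPoisson (lam : ℝ) (kk : ℕ) (x : ℕ) : ℝ :=
  Real.exp ((kk : ℝ) * (x : ℝ)) / Real.exp (lam * (Real.exp (kk : ℝ) - 1))

/-
Exponential tilting turns the Poisson law into a Poisson law: `f_k π_λ = π_{λ e^k}`, and
`log f_k` is affine in `x`. Entropy and Fisher information of `f_k` are therefore first
moments of `π_{λ e^k}`, namely `λ(k e^k - e^k + 1)` and `λ k (e^k - 1)`. Their ratio is
`1 - 1/k + 1/(e^k - 1) → 1` while `I(f_k) → ∞`, which is incompatible with
`Ent ≤ Φ(I)` once `Φ(r)/r → 0`.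
-/

open Topology

lemma hasSum_piPoisson (m : ℝ) : HasSum (piPoisson m) 1 := by
  have h := (NormedSpace.expSeries_div_hasSum_exp m).mul_right (exp (-m))
  rw [← exp_eq_exp_ℝ, ← exp_add, add_neg_cancel, exp_zero] at h
  exact h.congr_fun fun x => by rw [piPoisson]; ring

lemma succ_mul_piPoisson_succ (m : ℝ) (x : ℕ) :
    ((x : ℝ) + 1) * piPoisson m (x + 1) = m * piPoisson m x := by
  have hx : (x.factorial : ℝ) ≠ 0 := by positivity
  simp only [piPoisson, Nat.factorial_succ, Nat.cast_mul, Nat.cast_succ]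
  field_simp
  ring

lemma hasSum_natCast_mul_piPoisson (m : ℝ) : HasSum (fun x : ℕ => (x : ℝ) * piPoisson m x) m := by
  rw [← hasSum_nat_add_iff' 1]
  simpa [succ_mul_piPoisson_succ] using (hasSum_piPoisson m).mul_left m

lemma fPoisson_pos (lam : ℝ) (kk x : ℕ) : 0 < fPoisson lam kk x :=
  div_pos (exp_pos _) (exp_pos _)

lemma fPoisson_mul_piPoisson (lam : ℝ) (kk x : ℕ) :
    fPoisson lam kk x * piPoisson lam x = piPoisson (lam * exp kk) x := by
  have hsplit : exp (-lam) = exp (-(lam * exp kk)) * exp (lam * (exp kk - 1)) := by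
    rw [← exp_add]
    ring_nf
  rw [fPoisson, piPoisson, piPoisson, mul_comm (kk : ℝ), exp_nat_mul, hsplit, mul_pow]
  field_simp

lemma log_fPoisson (lam : ℝ) (kk x : ℕ) :
    log (fPoisson lam kk x) = kk * x - lam * (exp kk - 1) := by
  rw [fPoisson, log_div (exp_ne_zero _) (exp_ne_zero _), log_exp, log_exp]

lemma fPoisson_succ (lam : ℝ) (kk x : ℕ) :
    fPoisson lam kk (x + 1) = exp kk * fPoisson lam kk x := by
  rw [fPoisson, fPoisson, Nat.cast_succ, mul_add_one, exp_add]
  ring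

lemma hasSum_fPoisson_mul_piPoisson (lam : ℝ) (kk : ℕ) :
    HasSum (fun x => fPoisson lam kk x * piPoisson lam x) 1 := by
  simpa only [fPoisson_mul_piPoisson] using hasSum_piPoisson (lam * exp kk)

lemma hasSum_fPoisson_mul_log (lam : ℝ) (kk : ℕ) :
    HasSum (fun x => fPoisson lam kk x * log (fPoisson lam kk x) * piPoisson lam x)
      (kk * (lam * exp kk) - lam * (exp kk - 1)) := by
  have h := ((hasSum_natCast_mul_piPoisson (lam * exp kk)).mul_left (kk : ℝ)).sub
    ((hasSum_piPoisson (lam * exp kk)).mul_left (lam * (exp kk - 1)))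
  rw [mul_one] at h
  refine h.congr_fun fun x => ?_
  rw [mul_right_comm, fPoisson_mul_piPoisson, log_fPoisson]
  ring

lemma entFn_fPoisson (lam : ℝ) (kk : ℕ) :
    entFn (piPoisson lam) (fPoisson lam kk) = lam * (kk * exp kk - exp kk + 1) := by
  rw [entFn, (hasSum_fPoisson_mul_piPoisson lam kk).tsum_eq,
    (hasSum_fPoisson_mul_log lam kk).tsum_eq, log_one]
  ring

lemma hasSum_of_support_subset_adjacent {E : Type*} [AddCommMonoid E] [TopologicalSpace E]
    [ContinuousAdd E] {g : ℕ × ℕ → E} {a b : E}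
    (hg : ∀ x y, y ≠ x + 1 → x ≠ y + 1 → g (x, y) = 0)
    (hup : HasSum (fun x => g (x, x + 1)) a) (hdown : HasSum (fun x => g (x + 1, x)) b) :
    HasSum g (a + b) := by
  have hinj_up : Function.Injective fun x : ℕ => (x, x + 1) := fun x y h => congrArg Prod.fst h
  have hinj_down : Function.Injective fun x : ℕ => (x + 1, x) := fun x y h => congrArg Prod.snd h
  have hdisj : Disjoint (range fun x : ℕ => (x, x + 1)) (range fun x : ℕ => (x + 1, x)) := by
    rw [disjoint_iff_forall_ne]
    rintro _ ⟨x, rfl⟩ _ ⟨y, rfl⟩ h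
    simp only [Prod.mk.injEq] at h
    omega
  have hsupp : Function.support g ⊆
      (range fun x : ℕ => (x, x + 1)) ∪ (range fun x : ℕ => (x + 1, x)) := by
    rintro ⟨x, y⟩ hxy
    by_contra hnot
    simp only [mem_union, mem_range, Prod.mk.injEq, not_or, not_exists, not_and] at hnot
    exact hxy (hg x y (fun h => hnot.1 x rfl h.symm) (fun h => hnot.2 y h.symm rfl))
  exact (hasSum_subtype_iff_of_support_subset hsupp).1
    (HasSum.add_disjoint hdisj (hinj_up.hasSum_range_iff.2 hup) (hinj_down.hasSum_range_iff.2 hdown))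

lemma kPoisson_succ_right (lam : ℝ) (x : ℕ) : kPoisson lam x (x + 1) = lam := by
  simp [kPoisson]

lemma kPoisson_succ_left (lam : ℝ) (x : ℕ) : kPoisson lam (x + 1) x = x + 1 := by
  rw [kPoisson, if_neg (by omega), if_pos rfl, Nat.cast_succ]

lemma kPoisson_of_not_adjacent (lam : ℝ) {x y : ℕ} (hup : y ≠ x + 1) (hdown : x ≠ y + 1)
    (hxy : y ≠ x) : kPoisson lam x y = 0 := by
  rw [kPoisson, if_neg hup, if_neg (by omega), if_neg hxy]

lemma hasSum_fisher_fPoisson (lam : ℝ) (kk : ℕ) :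
    HasSum (fun p : ℕ × ℕ => kPoisson lam p.1 p.2 * (fPoisson lam kk p.2 - fPoisson lam kk p.1) *
        (log (fPoisson lam kk p.2) - log (fPoisson lam kk p.1)) * piPoisson lam p.1)
      (2 * (lam * kk * (exp kk - 1))) := by
  have hedge : HasSum (fun x => lam * kk * (exp kk - 1) * piPoisson (lam * exp kk) x)
      (lam * kk * (exp kk - 1)) := by
    simpa using (hasSum_piPoisson (lam * exp kk)).mul_left (lam * kk * (exp kk - 1))
  rw [two_mul]
  refine hasSum_of_support_subset_adjacent (fun x y hup hdown => ?_) ?_ ?_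
  · by_cases hxy : y = x
    · simp [hxy]
    · simp [kPoisson_of_not_adjacent lam hup hdown hxy]
  · convert hedge using 2 with x
    rw [kPoisson_succ_right, log_fPoisson, log_fPoisson, fPoisson_succ,
      ← fPoisson_mul_piPoisson, Nat.cast_succ]
    ring
  · convert hedge using 2 with x
    rw [kPoisson_succ_left, log_fPoisson, log_fPoisson, fPoisson_succ,
      ← fPoisson_mul_piPoisson, Nat.cast_succ]
    -- detailed balance `(x + 1) π_λ(x + 1) = λ π_λ(x)` makes the downward edge match the upward one
    linear_combination (kk * (exp kk - 1) * fPoisson lam kk x) * succ_mul_piPoisson_succ lam x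

lemma fisherFn_fPoisson (lam : ℝ) (kk : ℕ) :
    fisherFn (kPoisson lam) (piPoisson lam) (fPoisson lam kk) = lam * kk * (exp kk - 1) := by
  rw [fisherFn, (hasSum_fisher_fPoisson lam kk).tsum_eq]
  ring

lemma tendsto_entropy_div_fisher_atTop :
    Tendsto (fun t : ℝ => (t * exp t - exp t + 1) / (t * (exp t - 1))) atTop (𝓝 1) := by
  have hexp : Tendsto (fun t : ℝ => exp t - 1) atTop atTop :=
    tendsto_atTop_add_const_right _ (-1) tendsto_exp_atTop
  have h := (tendsto_const_nhds (x := (1 : ℝ))).sub tendsto_inv_atTop_zero |>.add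
    hexp.inv_tendsto_atTop
  rw [sub_zero, add_zero] at h
  refine h.congr' ?_
  filter_upwards [eventually_gt_atTop 0] with t ht
  simp only [Pi.inv_apply]
  have he : exp t - 1 ≠ 0 := by linarith [add_one_lt_exp ht.ne']
  field_simp
  ring

lemma tendsto_fisherFn_fPoisson {lam : ℝ} (hlam : 0 < lam) :
    Tendsto (fun kk : ℕ => fisherFn (kPoisson lam) (piPoisson lam) (fPoisson lam kk))
      atTop atTop := by
  simp only [fisherFn_fPoisson]
  have hexp : Tendsto (fun kk : ℕ => exp kk - 1) atTop atTop :=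
    tendsto_atTop_add_const_right _ (-1) (tendsto_exp_atTop.comp tendsto_natCast_atTop_atTop)
  exact (tendsto_natCast_atTop_atTop.const_mul_atTop hlam).atTop_mul_atTop₀ hexp

lemma not_forall_le_of_tendsto_div {ι : Type*} {l : Filter ι} [l.NeBot] {Φ : ℝ → ℝ}
    (hΦ : Tendsto (fun r => Φ r / r) atTop (𝓝 0)) {E I : ι → ℝ} {c : ℝ} (hc : 0 < c)
    (hI : Tendsto I l atTop) (hEI : Tendsto (fun i => E i / I i) l (𝓝 c)) :
    ¬ ∀ i, E i ≤ Φ (I i) := by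
  intro hle
  obtain ⟨i, hpos, hsmall, hbig⟩ := ((hI.eventually (eventually_gt_atTop 0)).and
    ((hI.eventually (hΦ.eventually (gt_mem_nhds (half_pos hc)))).and
      (hEI.eventually (lt_mem_nhds (half_lt_self hc))))).exists
  have := div_le_div_of_nonneg_right (hle i) hpos.le
  linarith

/-- Example 3.8: for the Poisson birth-death process one has
`Ent_μ(f_k) = λ(k e^k - e^k + 1)` and `I(f_k) = λ k (e^k - 1)`, so the ratio tends
to `1`; hence `EI(Φ)` fails for any growth function of sublinear growth. -/
theorem stmt_16 (lam : ℝ) (hlam : 0 < lam) :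
    (∀ kk : ℕ,
      (∀ x : ℕ, 0 < fPoisson lam kk x)
      ∧ (∑' x : ℕ, fPoisson lam kk x * piPoisson lam x) = 1
      ∧ (Summable fun x : ℕ =>
          fPoisson lam kk x * Real.log (fPoisson lam kk x) * piPoisson lam x)
      ∧ entFn (piPoisson lam) (fPoisson lam kk) =
          lam * ((kk : ℝ) * Real.exp (kk : ℝ) - Real.exp (kk : ℝ) + 1)
      ∧ FisherFinite (kPoisson lam) (piPoisson lam) (fPoisson lam kk)
      ∧ fisherFn (kPoisson lam) (piPoisson lam) (fPoisson lam kk) =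
          lam * (kk : ℝ) * (Real.exp (kk : ℝ) - 1))
    ∧ Tendsto (fun kk : ℕ =>
        entFn (piPoisson lam) (fPoisson lam kk) /
          fisherFn (kPoisson lam) (piPoisson lam) (fPoisson lam kk)) atTop (nhds 1)
    ∧ ∀ Φ : ℝ → ℝ, GrowthFun Φ → Tendsto (fun r => Φ r / r) atTop (nhds 0) →
        ¬ EIineq (kPoisson lam) (piPoisson lam) Φ := by
  have hratio : Tendsto (fun kk : ℕ => entFn (piPoisson lam) (fPoisson lam kk) /
      fisherFn (kPoisson lam) (piPoisson lam) (fPoisson lam kk)) atTop (𝓝 1) := by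
    refine (tendsto_entropy_div_fisher_atTop.comp tendsto_natCast_atTop_atTop).congr fun kk => ?_
    rw [Function.comp_apply, entFn_fPoisson, fisherFn_fPoisson, mul_assoc,
      mul_div_mul_left _ _ hlam.ne']
  refine ⟨fun kk => ⟨fPoisson_pos lam kk, (hasSum_fPoisson_mul_piPoisson lam kk).tsum_eq,
      (hasSum_fPoisson_mul_log lam kk).summable, entFn_fPoisson lam kk,
      (hasSum_fisher_fPoisson lam kk).summable, fisherFn_fPoisson lam kk⟩,
    hratio, fun Φ _ hΦ hEI => ?_⟩
  exact not_forall_le_of_tendsto_div hΦ one_pos (tendsto_fisherFn_fPoisson hlam) hratio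
    fun kk => hEI _ (fPoisson_pos lam kk) (hasSum_fPoisson_mul_piPoisson lam kk).tsum_eq
      (hasSum_fPoisson_mul_log lam kk).summable (hasSum_fisher_fPoisson lam kk).summable
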